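/- Let t ≥ 3, let 1 ≤ n_1 ≤ ⋯ ≤ n_t be integers, let m = n_1 + ⋯ + n_{t−1} and n = n_t. Then strc(K_{n_1,…,n_t}) equals 1 if n = 1; equals 3 if n ≥ 2 and m > n; and equals ⌈n^{1/m}⌉ + 1 if m ≤ n, where ⌈n^{1/m}⌉ is the least integer b with b^m ≥ n. -/

import Mathlib

/- Definitions of the six rainbow connection parameters.

A colouring with (at most) `k` colours uses colours from `{0, ..., k-1}`.
Following the usual convention in the literature, only the colours appearing
on the edges / internal vertices of the witnessing paths are required to lie
in the palette; this yields e.g. `rvc(G) = 0` for complete graphs `G`. -/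

namespace RainbowConn

variable {V : Type*}

/-- The internal vertices of a walk. -/
def internals {G : SimpleGraph V} {u v : V} (p : G.Walk u v) : List V :=
  p.support.tail.dropLast

/-- The rainbow connection number `rc G`: the minimum number of colours in an
edge-colouring of `G` such that any two vertices are connected by a rainbow path. -/
noncomputable def rc (G : SimpleGraph V) : ℕ :=
  sInf {k | ∃ c : Sym2 V → ℕ, ∀ u v : V, ∃ p : G.Walk u v, p.IsPath ∧
    (p.edges.map c).Nodup ∧ ∀ e ∈ p.edges, c e < k}

/-- The strong rainbow connection number `src G`: the minimum number of colours in an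
edge-colouring of `G` such that any two vertices are connected by a rainbow geodesic. -/
noncomputable def src (G : SimpleGraph V) : ℕ :=
  sInf {k | ∃ c : Sym2 V → ℕ, ∀ u v : V, ∃ p : G.Walk u v, p.IsPath ∧
    p.length = G.dist u v ∧ (p.edges.map c).Nodup ∧ ∀ e ∈ p.edges, c e < k}

/-- The rainbow vertex-connection number `rvc G`: the minimum number of colours in a
vertex-colouring of `G` such that any two vertices are connected by a vertex-rainbow path. -/
noncomputable def rvc (G : SimpleGraph V) : ℕ :=
  sInf {k | ∃ c : V → ℕ, ∀ u v : V, ∃ p : G.Walk u v, p.IsPath ∧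
    ((internals p).map c).Nodup ∧ ∀ x ∈ internals p, c x < k}

/-- The strong rainbow vertex-connection number `srvc G`: the minimum number of colours in a
vertex-colouring of `G` such that any two vertices are connected by a vertex-rainbow
geodesic. -/
noncomputable def srvc (G : SimpleGraph V) : ℕ :=
  sInf {k | ∃ c : V → ℕ, ∀ u v : V, ∃ p : G.Walk u v, p.IsPath ∧
    p.length = G.dist u v ∧ ((internals p).map c).Nodup ∧ ∀ x ∈ internals p, c x < k}

/-- The total rainbow connection number `trc G`: the minimum number of colours in a
total-colouring of `G` such that any two vertices are connected by a total-rainbow path. -/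
noncomputable def trc (G : SimpleGraph V) : ℕ :=
  sInf {k | ∃ (cE : Sym2 V → ℕ) (cV : V → ℕ), ∀ u v : V, ∃ p : G.Walk u v, p.IsPath ∧
    (p.edges.map cE ++ (internals p).map cV).Nodup ∧
    (∀ e ∈ p.edges, cE e < k) ∧ ∀ x ∈ internals p, cV x < k}

/-- The strong total rainbow connection number `strc G`: the minimum number of colours in a
total-colouring of `G` such that any two vertices are connected by a total-rainbow
geodesic. -/
noncomputable def strc (G : SimpleGraph V) : ℕ :=
  sInf {k | ∃ (cE : Sym2 V → ℕ) (cV : V → ℕ), ∀ u v : V, ∃ p : G.Walk u v, p.IsPath ∧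
    p.length = G.dist u v ∧ (p.edges.map cE ++ (internals p).map cV).Nodup ∧
    (∀ e ∈ p.edges, cE e < k) ∧ ∀ x ∈ internals p, cV x < k}


open SimpleGraph

/-- The set of admissible palette sizes for `strc`. -/
def SS (G : SimpleGraph V) : Set ℕ :=
  {k | ∃ (cE : Sym2 V → ℕ) (cV : V → ℕ), ∀ u v : V, ∃ p : G.Walk u v, p.IsPath ∧
    p.length = G.dist u v ∧ (p.edges.map cE ++ (internals p).map cV).Nodup ∧
    (∀ e ∈ p.edges, cE e < k) ∧ ∀ x ∈ internals p, cV x < k}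

lemma SS_mono {G : SimpleGraph V} {j k : ℕ} (hjk : j ≤ k) (h : j ∈ SS G) : k ∈ SS G := by
  obtain ⟨cE, cV, h⟩ := h
  refine ⟨cE, cV, fun u v => ?_⟩
  obtain ⟨p, h1, h2, h3, h4, h5⟩ := h u v
  exact ⟨p, h1, h2, h3, fun e he => lt_of_lt_of_le (h4 e he) hjk,
    fun x hx => lt_of_lt_of_le (h5 x hx) hjk⟩

/-- Strong separation bound. -/
lemma sep_bound {I W : Type*} [DecidableEq W] (s : ℕ) (hs : 1 ≤ s)
    (A : W → Finset ℕ) (hA : ∀ w, (A w).card ≤ s) (F : I → W → ℕ) :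
    ∀ (T : Finset W) (ι : Finset I),
      (∀ u ∈ ι, ∀ v ∈ ι, u ≠ v → ∃ w ∈ T, F u w ≠ F v w ∧ F u w ∈ A w ∧ F v w ∈ A w) →
      ι.card ≤ s ^ T.card := by
  intro T
  classical
  induction T using Finset.induction_on with
  | empty =>
    intro ι hι
    simp only [Finset.card_empty, pow_zero]
    rw [Finset.card_le_one]
    intro u hu v hv
    by_contra hne
    obtain ⟨w, hw, -⟩ := hι u hu v hv hne
    exact absurd hw (Finset.notMem_empty w)
  | @insert w₀ T' hw₀ IH =>
    intro ι hι
    set ιb := ι.filter (fun u => F u w₀ ∉ A w₀) with hιb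
    set ιg := ι.filter (fun u => F u w₀ ∈ A w₀) with hιg
    have hsplit : ιb.card + ιg.card = ι.card := by
      simpa using Finset.card_filter_add_card_filter_not
        (s := ι) (p := fun u => F u w₀ ∉ A w₀)
    have hwit : ∀ (σ : Finset I), σ ⊆ ι →
        (∀ u ∈ σ, ∀ v ∈ σ, u ≠ v → ¬(F u w₀ ≠ F v w₀ ∧ F u w₀ ∈ A w₀ ∧ F v w₀ ∈ A w₀)) →
        σ.card ≤ s ^ T'.card := by
      intro σ hσ hno
      refine IH σ (fun u hu v hv hne => ?_)
      obtain ⟨w, hw, hp⟩ := hι u (hσ hu) v (hσ hv) hne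
      rcases Finset.mem_insert.1 hw with rfl | hw'
      · exact absurd hp (hno u hu v hv hne)
      · exact ⟨w, hw', hp⟩
    have hb : ιb.card ≤ s ^ T'.card := by
      refine hwit ιb (Finset.filter_subset _ _) (fun u hu v hv hne hp => ?_)
      exact (Finset.mem_filter.1 hu).2 hp.2.1
    have hfib : ιg.card = ∑ a ∈ A w₀, (ιg.filter (fun u => F u w₀ = a)).card := by
      exact Finset.card_eq_sum_card_fiberwise (fun u hu => (Finset.mem_filter.1 hu).2)
    have hba : ∀ a ∈ A w₀, ιb.card + (ιg.filter (fun u => F u w₀ = a)).card ≤ s ^ T'.card := by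
      intro a ha
      have hdisj : Disjoint ιb (ιg.filter (fun u => F u w₀ = a)) := by
        rw [Finset.disjoint_left]
        intro u hu hu'
        have h1 := (Finset.mem_filter.1 hu).2
        have h2 := (Finset.mem_filter.1 (Finset.mem_filter.1 hu').1).2
        exact h1 h2
      rw [← Finset.card_union_of_disjoint hdisj]
      refine hwit _ ?_ ?_
      · intro u hu
        rcases Finset.mem_union.1 hu with h | h
        · exact (Finset.mem_filter.1 h).1
        · exact (Finset.mem_filter.1 (Finset.mem_filter.1 h).1).1
      · intro u hu v hv hne hp
        rcases Finset.mem_union.1 hu with h | h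
        · exact (Finset.mem_filter.1 h).2 hp.2.1
        · rcases Finset.mem_union.1 hv with h' | h'
          · exact (Finset.mem_filter.1 h').2 hp.2.2
          · have e1 := (Finset.mem_filter.1 h).2
            have e2 := (Finset.mem_filter.1 h').2
            exact hp.1 (e1.trans e2.symm)
    rw [Finset.card_insert_of_notMem hw₀, pow_succ]
    rcases Nat.eq_zero_or_pos (A w₀).card with hc | hc
    · have : ιg.card = 0 := by
        rw [hfib, Finset.card_eq_zero.1 hc]; simp
      have : ι.card = ιb.card := by omega
      calc ι.card = ιb.card := this
        _ ≤ s ^ T'.card := hb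
        _ ≤ s ^ T'.card * s := Nat.le_mul_of_pos_right _ hs
    · have hsum : ιg.card ≤ (A w₀).card * (s ^ T'.card - ιb.card) := by
        rw [hfib]
        calc ∑ a ∈ A w₀, (ιg.filter (fun u => F u w₀ = a)).card
            ≤ ∑ _a ∈ A w₀, (s ^ T'.card - ιb.card) := by
              refine Finset.sum_le_sum (fun a ha => ?_)
              have := hba a ha; omega
          _ = (A w₀).card * (s ^ T'.card - ιb.card) := by
              rw [Finset.sum_const, smul_eq_mul]
      have hAs := hA w₀
      have hbP : ιb.card ≤ s ^ T'.card := hb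
      have : ι.card ≤ ιb.card + (A w₀).card * (s ^ T'.card - ιb.card) := by omega
      calc ι.card ≤ ιb.card + (A w₀).card * (s ^ T'.card - ιb.card) := this
        _ ≤ (A w₀).card * ιb.card + (A w₀).card * (s ^ T'.card - ιb.card) :=
            Nat.add_le_add_right (Nat.le_mul_of_pos_left _ hc) _
        _ = (A w₀).card * s ^ T'.card := by rw [← Nat.mul_add]; congr 1; omega
        _ ≤ s ^ T'.card * s := by
            rw [Nat.mul_comm]; exact Nat.mul_le_mul_left _ hAs


/-- An injective code with prescribed unit vectors on the first `m` rows. -/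
lemma exists_code (b m n : ℕ) (hb : 2 ≤ b) (hmn : m ≤ n) (hnb : n ≤ b ^ m) :
    ∃ g : Fin n → Fin m → ℕ, Function.Injective g ∧ (∀ x k, g x k < b) ∧
      ∀ (x : Fin n), x.val < m → ∀ (k : Fin m),
        g x k = if k.val = x.val then 1 else 0 := by
  classical
  have hb0 : 0 < b := by omega
  set e : Fin m → (Fin m → Fin b) :=
    fun j k => ⟨if k = j then 1 else 0, by split <;> omega⟩ with he
  have einj : Function.Injective e := by
    intro j j' h
    by_contra hne
    have := congrArg Fin.val (congrFun h j)
    simp [he, hne] at this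
  have hcard : Fintype.card {v : Fin m → Fin b // v ∉ Set.range e} = b ^ m - m := by
    have h1 : Fintype.card {v : Fin m → Fin b // v ∈ Set.range e} = m :=
      (Fintype.card_congr (Equiv.ofInjective e einj).symm).trans (Fintype.card_fin m)
    rw [Fintype.card_subtype_compl, h1]
    congr 1
    simp
  have hle : Fintype.card (Fin (n - m)) ≤
      Fintype.card {v : Fin m → Fin b // v ∉ Set.range e} := by
    rw [hcard, Fintype.card_fin]; omega
  obtain ⟨emb⟩ := Function.Embedding.nonempty_of_card_le hle
  set gF : Fin n → Fin m → Fin b :=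
    fun x => if h : x.val < m then e ⟨x.val, h⟩ else (emb ⟨x.val - m, by omega⟩).val with hgF
  have gFinj : Function.Injective gF := by
    intro x y h
    rw [hgF] at h
    by_cases hx : x.val < m <;> by_cases hy : y.val < m <;>
      simp only [hx, hy, dif_pos, dif_neg, not_false_iff] at h
    · have h3 := einj h
      rw [Fin.mk.injEq] at h3
      exact Fin.ext h3
    · exact absurd ⟨_, h⟩ (emb ⟨y.val - m, by omega⟩).2
    · exact absurd ⟨_, h.symm⟩ (emb ⟨x.val - m, by omega⟩).2
    · have h2 := congrArg Fin.val (emb.injective (Subtype.ext h))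
      simp only at h2
      exact Fin.ext (by omega)
  refine ⟨fun x k => (gF x k).val, ?_, fun x k => (gF x k).2, ?_⟩
  · intro x y h
    exact gFinj (funext fun k => Fin.ext (congrFun h k))
  · intro x hx k
    rw [hgF]
    simp only [hx, dif_pos]
    simp [he, Fin.ext_iff]


section MP

variable {t : ℕ} {ns : Fin t → ℕ}

lemma mp_adj {u v : (i : Fin t) × Fin (ns i)} (h : u.1 ≠ v.1) :
    (completeMultipartiteGraph fun i => Fin (ns i)).Adj u v := h

lemma sigma_ne {u v : (i : Fin t) × Fin (ns i)} (h : u.1 ≠ v.1) : u ≠ v :=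
  fun hc => h (congrArg Sigma.fst hc)

lemma other_index (ht : 2 ≤ t) (i : Fin t) : ∃ i' : Fin t, i' ≠ i := by
  rcases Nat.eq_zero_or_pos i.val with h | h
  · exact ⟨⟨1, by omega⟩, fun hc => by simp [Fin.ext_iff, h] at hc⟩
  · exact ⟨⟨0, by omega⟩, fun hc => by simp [Fin.ext_iff] at hc; omega⟩

lemma mp_dist_of_ne {u v : (i : Fin t) × Fin (ns i)} (h : u.1 ≠ v.1) :
    (completeMultipartiteGraph fun i => Fin (ns i)).dist u v = 1 :=
  dist_eq_one_iff_adj.2 (mp_adj h)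

lemma mp_dist_of_eq (ht : 2 ≤ t) (hpos : ∀ i, 1 ≤ ns i)
    {u v : (i : Fin t) × Fin (ns i)} (h : u.1 = v.1) (hne : u ≠ v) :
    (completeMultipartiteGraph fun i => Fin (ns i)).dist u v = 2 := by
  obtain ⟨i', hi'⟩ := other_index ht u.1
  set w : (i : Fin t) × Fin (ns i) := ⟨i', ⟨0, hpos i'⟩⟩ with hw
  have h1 : u.1 ≠ w.1 := fun hc => hi' hc.symm
  have h2 : w.1 ≠ v.1 := by rw [← h]; exact hi'
  set p : (completeMultipartiteGraph fun i => Fin (ns i)).Walk u v :=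
    Walk.cons (mp_adj h1) (Walk.cons (mp_adj h2) Walk.nil) with hp
  have hle : (completeMultipartiteGraph fun i => Fin (ns i)).dist u v ≤ 2 := by
    have := SimpleGraph.dist_le p
    simpa [hp] using this
  have h0 : (completeMultipartiteGraph fun i => Fin (ns i)).dist u v ≠ 0 := by
    have : 0 < _ := Reachable.pos_dist_of_ne ⟨p⟩ hne
    omega
  have h1' : (completeMultipartiteGraph fun i => Fin (ns i)).dist u v ≠ 1 := by
    intro hc
    have := dist_eq_one_iff_adj.1 hc
    exact this h
  omega

/-- Upper bound plumbing: a suitable colouring certifies membership in `SS`. -/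
lemma mem_SS (ht : 2 ≤ t) (hpos : ∀ i, 1 ≤ ns i) (k : ℕ)
    (cE : Sym2 ((i : Fin t) × Fin (ns i)) → ℕ) (cV : (i : Fin t) × Fin (ns i) → ℕ)
    (hA : ∀ u v : (i : Fin t) × Fin (ns i), u.1 ≠ v.1 → cE s(u, v) < k)
    (hB : ∀ u v : (i : Fin t) × Fin (ns i), u.1 = v.1 → u ≠ v →
      ∃ w, w.1 ≠ u.1 ∧ w.1 ≠ v.1 ∧
        cE s(u, w) ≠ cE s(w, v) ∧ cE s(u, w) ≠ cV w ∧ cE s(w, v) ≠ cV w ∧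
        cE s(u, w) < k ∧ cE s(w, v) < k ∧ cV w < k) :
    k ∈ SS (completeMultipartiteGraph fun i => Fin (ns i)) := by
  refine ⟨cE, cV, fun u v => ?_⟩
  by_cases huv : u = v
  · subst huv
    refine ⟨Walk.nil, Walk.IsPath.nil, ?_, ?_, ?_, ?_⟩
    · simp [SimpleGraph.dist_self]
    · simp [internals]
    · simp
    · simp [internals]
  by_cases h1 : u.1 = v.1
  · obtain ⟨w, hw1, hw2, hne, hne1, hne2, hb1, hb2, hb3⟩ := hB u v h1 huv
    have hadj1 : (completeMultipartiteGraph fun i => Fin (ns i)).Adj u w :=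
      mp_adj (fun hc => hw1 hc.symm)
    have hadj2 : (completeMultipartiteGraph fun i => Fin (ns i)).Adj w v := mp_adj hw2
    refine ⟨Walk.cons hadj1 (Walk.cons hadj2 Walk.nil), ?_, ?_, ?_, ?_, ?_⟩
    · rw [Walk.isPath_def]
      simp only [Walk.support_cons, Walk.support_nil]
      refine List.nodup_cons.2 ⟨?_, List.nodup_cons.2 ⟨?_, List.nodup_cons.2 ⟨by simp, List.nodup_nil⟩⟩⟩
      · intro hc
        rcases List.mem_cons.1 hc with hc | hc
        · exact hw1 (congrArg Sigma.fst hc.symm)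
        · rcases List.mem_cons.1 hc with hc | hc
          · exact huv hc
          · simp at hc
      · intro hc
        rcases List.mem_cons.1 hc with hc | hc
        · exact hw2 (congrArg Sigma.fst hc)
        · simp at hc
    · simp [mp_dist_of_eq ht hpos h1 huv]
    · simp only [Walk.edges_cons, Walk.edges_nil, internals, Walk.support_cons, Walk.support_nil]
      simp [hne, hne1, hne2]
    · intro e he
      simp only [Walk.edges_cons, Walk.edges_nil] at he
      rcases List.mem_cons.1 he with rfl | he
      · exact hb1
      · rcases List.mem_cons.1 he with rfl | he
        · exact hb2
        · simp at he
    · intro x hx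
      simp only [internals, Walk.support_cons, Walk.support_nil] at hx
      simp at hx
      subst hx
      exact hb3
  · have hadj : (completeMultipartiteGraph fun i => Fin (ns i)).Adj u v := mp_adj h1
    refine ⟨Walk.cons hadj Walk.nil, ?_, ?_, ?_, ?_, ?_⟩
    · rw [Walk.isPath_def]
      simp [huv]
    · simp [mp_dist_of_ne h1]
    · simp [internals]
    · intro e he
      simp only [Walk.edges_cons, Walk.edges_nil] at he
      rcases List.mem_cons.1 he with rfl | he
      · exact hA u v h1
      · simp at he
    · intro x hx
      simp [internals] at hx

/-- Lower bound plumbing: extract the triple condition from membership in `SS`. -/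
lemma of_mem_SS (ht : 2 ≤ t) (hpos : ∀ i, 1 ≤ ns i) (k : ℕ)
    (hk : k ∈ SS (completeMultipartiteGraph fun i => Fin (ns i))) :
    ∃ (cE : Sym2 ((i : Fin t) × Fin (ns i)) → ℕ) (cV : (i : Fin t) × Fin (ns i) → ℕ),
      ∀ u v : (i : Fin t) × Fin (ns i), u.1 = v.1 → u ≠ v →
      ∃ w, w.1 ≠ u.1 ∧
        cE s(u, w) ≠ cE s(w, v) ∧ cE s(u, w) ≠ cV w ∧ cE s(w, v) ≠ cV w ∧
        cE s(u, w) < k ∧ cE s(w, v) < k ∧ cV w < k := by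
  obtain ⟨cE, cV, h⟩ := hk
  refine ⟨cE, cV, fun u v h1 hne => ?_⟩
  obtain ⟨p, hpath, hlen, hnd, hbe, hbv⟩ := h u v
  rw [mp_dist_of_eq ht hpos h1 hne] at hlen
  -- destructure p as a length-2 walk
  cases p with
  | nil => simp at hlen
  | cons hadj q =>
    rename_i w
    cases q with
    | nil => simp at hlen
    | cons hadj2 q2 =>
      cases q2 with
      | nil =>
        refine ⟨w, fun hc => hadj hc.symm, ?_⟩
        have hedges : (Walk.cons hadj (Walk.cons hadj2 Walk.nil)).edges = [s(u, w), s(w, v)] := by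
          simp
        have hint : internals (Walk.cons hadj (Walk.cons hadj2 Walk.nil)) = [w] := by
          simp [internals]
        rw [hedges, hint] at hnd
        rw [hedges] at hbe
        rw [hint] at hbv
        simp only [List.map_cons, List.map_nil] at hnd
        have h1' := List.nodup_cons.1 hnd
        have h2' := List.nodup_cons.1 h1'.2
        refine ⟨?_, ?_, ?_, ?_, ?_, ?_⟩
        · intro hc; exact h1'.1 (by simp [hc])
        · intro hc; exact h1'.1 (by simp [hc])
        · intro hc; exact h2'.1 (by simp [hc])
        · exact hbe _ (by simp)
        · exact hbe _ (by simp)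
        · exact hbv _ (by simp)
      | cons h3 q3 =>
        simp only [Walk.length_cons] at hlen
        omega
end MP

lemma last_lt {t : ℕ} (ht : 3 ≤ t) : t - 1 < t := by omega

section Rank

variable {t : ℕ} {ns : Fin t → ℕ}

/-- Global lexicographic rank of a vertex. -/
def rank (ns : Fin t → ℕ) (v : (i : Fin t) × Fin (ns i)) : ℕ :=
  (∑ i ∈ Finset.univ.filter (fun i => i < v.1), ns i) + v.2.val

lemma rank_snd {u v : (i : Fin t) × Fin (ns i)} (h : u.1 = v.1) :
    rank ns u = rank ns v ↔ u.2.val = v.2.val := by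
  obtain ⟨i, a⟩ := u
  obtain ⟨j, b⟩ := v
  simp only at h
  subst h
  simp [rank]

lemma rank_lt_of_fst_lt {u v : (i : Fin t) × Fin (ns i)} (h : u.1 < v.1) :
    rank ns u < rank ns v := by
  have hsub : Finset.univ.filter (fun i => i < u.1) ∪ {u.1} ⊆
      Finset.univ.filter (fun i => i < v.1) := by
    intro i hi
    rcases Finset.mem_union.1 hi with hi | hi
    · simp only [Finset.mem_filter, Finset.mem_univ, true_and] at hi ⊢
      exact hi.trans h
    · simp only [Finset.mem_singleton] at hi
      subst hi
      simp only [Finset.mem_filter, Finset.mem_univ, true_and]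
      exact h
  have hdisj : Disjoint (Finset.univ.filter (fun i => i < u.1)) {u.1} := by
    simp [Finset.disjoint_singleton_right]
  calc rank ns u = (∑ i ∈ Finset.univ.filter (fun i => i < u.1), ns i) + u.2.val := rfl
    _ < (∑ i ∈ Finset.univ.filter (fun i => i < u.1), ns i) + ns u.1 := by
        have := u.2.isLt; omega
    _ = ∑ i ∈ Finset.univ.filter (fun i => i < u.1) ∪ {u.1}, ns i := by
        rw [Finset.sum_union hdisj, Finset.sum_singleton]
    _ ≤ ∑ i ∈ Finset.univ.filter (fun i => i < v.1), ns i :=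
        Finset.sum_le_sum_of_subset hsub
    _ ≤ rank ns v := Nat.le_add_right _ _

lemma rank_injective : Function.Injective (rank ns) := by
  intro u v h
  rcases lt_trichotomy u.1 v.1 with hlt | heq | hlt
  · exact absurd h (Nat.ne_of_lt (rank_lt_of_fst_lt hlt))
  · obtain ⟨i, a⟩ := u
    obtain ⟨j, b⟩ := v
    simp only at heq
    subst heq
    have := (rank_snd (u := ⟨i, a⟩) (v := ⟨i, b⟩) rfl).1 h
    simp only at this
    rw [Fin.ext_iff.symm] at this
    rw [this]
  · exact absurd h.symm (Nat.ne_of_lt (rank_lt_of_fst_lt hlt))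

lemma sum_erase_last (ht : 3 ≤ t) :
    ∑ i ∈ Finset.univ.erase (⟨t - 1, last_lt ht⟩ : Fin t), ns i =
      (∑ i, ns i) - ns ⟨t - 1, last_lt ht⟩ := by
  have := Finset.sum_erase_add Finset.univ ns (Finset.mem_univ (⟨t - 1, last_lt ht⟩ : Fin t))
  omega

lemma rank_lt_m (ht : 3 ≤ t) {v : (i : Fin t) × Fin (ns i)}
    (hv : v.1 ≠ (⟨t - 1, last_lt ht⟩ : Fin t)) :
    rank ns v < (∑ i, ns i) - ns ⟨t - 1, last_lt ht⟩ := by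
  have hvlt : v.1.val < t - 1 := by
    have := v.1.isLt
    rcases Nat.lt_or_ge v.1.val (t-1) with h | h
    · exact h
    · exact absurd (Fin.ext (by omega : v.1.val = t - 1)) hv
  have hsub : Finset.univ.filter (fun i => i < v.1) ∪ {v.1} ⊆
      Finset.univ.erase (⟨t - 1, last_lt ht⟩ : Fin t) := by
    intro i hi
    have hival : i.val ≤ v.1.val := by
      rcases Finset.mem_union.1 hi with hi | hi
      · simp only [Finset.mem_filter, Finset.mem_univ, true_and, Fin.lt_def] at hi
        omega
      · simp only [Finset.mem_singleton] at hi; rw [hi]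
    refine Finset.mem_erase.2 ⟨?_, Finset.mem_univ i⟩
    intro hc
    rw [Fin.ext_iff] at hc
    simp only at hc
    omega
  have hdisj : Disjoint (Finset.univ.filter (fun i => i < v.1)) {v.1} := by
    simp [Finset.disjoint_singleton_right]
  have h1 : rank ns v < ∑ i ∈ Finset.univ.filter (fun i => i < v.1) ∪ {v.1}, ns i := by
    rw [Finset.sum_union hdisj, Finset.sum_singleton]
    have := v.2.isLt
    simp only [rank]
    omega
  have h2 := Finset.sum_le_sum_of_subset (f := ns) hsub
  have h3 := sum_erase_last (ns := ns) ht
  omega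

lemma card_big (ht : 3 ≤ t) :
    Fintype.card {v : (i : Fin t) × Fin (ns i) // v.1 = (⟨t - 1, last_lt ht⟩ : Fin t)} =
      ns ⟨t - 1, last_lt ht⟩ := by
  refine Fintype.card_congr ?_ |>.trans (Fintype.card_fin _)
  refine ⟨fun v => Fin.cast (by rw [v.2]) v.1.2, fun x => ⟨⟨⟨t - 1, last_lt ht⟩, x⟩, rfl⟩,
    ?_, fun x => rfl⟩
  rintro ⟨⟨i, a⟩, hv⟩
  simp only at hv
  subst hv
  rfl

lemma card_W (ht : 3 ≤ t) :
    Fintype.card {v : (i : Fin t) × Fin (ns i) // v.1 ≠ (⟨t - 1, last_lt ht⟩ : Fin t)} =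
      (∑ i, ns i) - ns ⟨t - 1, last_lt ht⟩ := by
  have h1 := Fintype.card_subtype_compl
    (fun v : (i : Fin t) × Fin (ns i) => v.1 = (⟨t - 1, last_lt ht⟩ : Fin t))
  rw [h1, card_big ht]
  congr 1
  rw [Fintype.card_sigma]
  simp

/-- The rank equivalence between the small classes and `Fin m`. -/
noncomputable def rankEquiv (ht : 3 ≤ t) :
    {v : (i : Fin t) × Fin (ns i) // v.1 ≠ (⟨t - 1, last_lt ht⟩ : Fin t)} ≃
      Fin ((∑ i, ns i) - ns ⟨t - 1, last_lt ht⟩) := by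
  refine Equiv.ofBijective (fun w => ⟨rank ns w.val, rank_lt_m ht w.2⟩) ?_
  rw [Fintype.bijective_iff_injective_and_card]
  constructor
  · intro w w' h
    have : rank ns w.val = rank ns w'.val := congrArg Fin.val h
    exact Subtype.ext (rank_injective this)
  · rw [card_W ht, Fintype.card_fin]

lemma rankEquiv_symm_val (ht : 3 ≤ t) (x : Fin ((∑ i, ns i) - ns ⟨t - 1, last_lt ht⟩)) :
    rank ns ((rankEquiv (ns := ns) ht).symm x).val = x.val := by
  have := (rankEquiv (ns := ns) ht).apply_symm_apply x
  exact congrArg Fin.val this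

end Rank




lemma strc_eq_sInf {V : Type*} (G : SimpleGraph V) : strc G = sInf (SS G) := rfl

lemma sInf_SS_eq {V : Type*} {G : SimpleGraph V} {k : ℕ} (h1 : k ∈ SS G)
    (h2 : k - 1 ∉ SS G) : sInf (SS G) = k := by
  have hmem : sInf (SS G) ∈ SS G := Nat.sInf_mem ⟨k, h1⟩
  have hle : sInf (SS G) ≤ k := Nat.sInf_le h1
  by_contra hne
  have hlt : sInf (SS G) ≤ k - 1 := by omega
  exact h2 (SS_mono hlt hmem)

lemma snd_ne {t : ℕ} {ns : Fin t → ℕ} {u v : (i : Fin t) × Fin (ns i)}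
    (h : u.1 = v.1) (hne : u ≠ v) : u.2.val ≠ v.2.val := by
  obtain ⟨i, a⟩ := u
  obtain ⟨j, b⟩ := v
  simp only at h
  subst h
  intro hc
  exact hne (congrArg (Sigma.mk i) (Fin.ext hc))

lemma le_last {t : ℕ} (ht : 3 ≤ t) (i : Fin t) : i ≤ (⟨t - 1, last_lt ht⟩ : Fin t) := by
  rw [Fin.le_def]
  have := i.isLt
  simp only
  omega

lemma case_one (t : ℕ) (ht : 3 ≤ t) (ns : Fin t → ℕ) (hpos : ∀ i, 1 ≤ ns i)
    (hmono : Monotone ns) (n : ℕ) (hn : n = ns ⟨t - 1, last_lt ht⟩) (h1 : n = 1) :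
    strc (completeMultipartiteGraph fun i => Fin (ns i)) = 1 := by
  rw [strc_eq_sInf]
  refine sInf_SS_eq ?_ ?_
  · refine mem_SS (by omega) hpos 1 (fun _ => 0) (fun _ => 0)
      (fun u v h => by simp) ?_
    intro u v hfst hne
    exfalso
    have hle : ns u.1 ≤ 1 := by
      have := hmono (le_last ht u.1)
      omega
    have hle' : ns v.fst ≤ 1 := by
      have := hmono (le_last ht v.1)
      omega
    have h2 := u.2.isLt
    have h3 := v.2.isLt
    exact snd_ne hfst hne (by omega)
  · intro h0
    obtain ⟨cE, cV, h⟩ := h0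
    obtain ⟨p, hpath, hlen, hnd, hbe, hbv⟩ :=
      h ⟨⟨0, by omega⟩, ⟨0, hpos _⟩⟩ ⟨⟨1, by omega⟩, ⟨0, hpos _⟩⟩
    have hfst : (⟨⟨0, by omega⟩, ⟨0, hpos _⟩⟩ : (i : Fin t) × Fin (ns i)).1 ≠
        (⟨⟨1, by omega⟩, ⟨0, hpos _⟩⟩ : (i : Fin t) × Fin (ns i)).1 := by
      simp [Fin.ext_iff]
    rw [mp_dist_of_ne hfst] at hlen
    have hel : p.edges.length = 1 := by rw [Walk.length_edges, hlen]
    cases he : p.edges with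
    | nil => rw [he] at hel; simp at hel
    | cons e es =>
      have := hbe e (by rw [he]; simp)
      omega


section Case2

variable {t : ℕ} {ns : Fin t → ℕ}

/-- The threshold colouring used when `m > n`. -/
def ecase2 (ns : Fin t → ℕ) (ht : 3 ≤ t) (n : ℕ) :
    Sym2 ((i : Fin t) × Fin (ns i)) → ℕ :=
  Sym2.lift ⟨fun u v =>
    if u.1 = (⟨t - 1, last_lt ht⟩ : Fin t) ∧ v.1 ≠ (⟨t - 1, last_lt ht⟩ : Fin t) then
      (if rank ns v % n ≤ u.2.val then 1 else 0)
    else if v.1 = (⟨t - 1, last_lt ht⟩ : Fin t) ∧ u.1 ≠ (⟨t - 1, last_lt ht⟩ : Fin t) then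
      (if rank ns u % n ≤ v.2.val then 1 else 0)
    else 0, by
      intro u v
      dsimp only
      split_ifs with h1 h2 h3 h4 h5 h6 <;> first | rfl | (exfalso; tauto)⟩

lemma ecase2_le (ht : 3 ≤ t) (n : ℕ) (u v : (i : Fin t) × Fin (ns i)) :
    ecase2 ns ht n s(u, v) ≤ 1 := by
  rw [ecase2, Sym2.lift_mk]
  dsimp only
  split_ifs <;> omega

lemma ecase2_big (ht : 3 ≤ t) (n : ℕ) {u w : (i : Fin t) × Fin (ns i)}
    (hu : u.1 = (⟨t - 1, last_lt ht⟩ : Fin t)) (hw : w.1 ≠ (⟨t - 1, last_lt ht⟩ : Fin t)) :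
    ecase2 ns ht n s(u, w) = if rank ns w % n ≤ u.2.val then 1 else 0 := by
  rw [ecase2, Sym2.lift_mk]
  dsimp only
  rw [if_pos ⟨hu, hw⟩]

lemma ecase2_big' (ht : 3 ≤ t) (n : ℕ) {u w : (i : Fin t) × Fin (ns i)}
    (hu : u.1 ≠ (⟨t - 1, last_lt ht⟩ : Fin t)) (hw : w.1 = (⟨t - 1, last_lt ht⟩ : Fin t)) :
    ecase2 ns ht n s(u, w) = if rank ns u % n ≤ w.2.val then 1 else 0 := by
  rw [ecase2, Sym2.lift_mk]
  dsimp only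
  rw [if_neg (fun hc => hc.2 hw), if_pos ⟨hw, hu⟩]

lemma mod_rank_ne (ht : 3 ≤ t) {n : ℕ} (hn0 : 0 < n)
    {u v : (i : Fin t) × Fin (ns i)} (h : u.1 = v.1) (hne : u ≠ v)
    (hns : ns u.1 ≤ n) : rank ns u % n ≠ rank ns v % n := by
  have h2 := snd_ne h hne
  obtain ⟨i, a⟩ := u
  obtain ⟨j, b⟩ := v
  simp only at h
  subst h
  simp only at h2 hns
  intro hc
  have hmodeq : (a.val : ℕ) ≡ b.val [MOD n] := by
    have : ((∑ x ∈ Finset.univ.filter (fun x => x < i), ns x) + a.val) ≡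
        ((∑ x ∈ Finset.univ.filter (fun x => x < i), ns x) + b.val) [MOD n] := hc
    exact Nat.ModEq.add_left_cancel' _ this
  have ha := a.isLt
  have hb := b.isLt
  have : a.val % n = b.val % n := hmodeq
  rw [Nat.mod_eq_of_lt (by omega), Nat.mod_eq_of_lt (by omega)] at this
  exact h2 this

end Case2

set_option maxHeartbeats 2000000 in
lemma case_two (t : ℕ) (ht : 3 ≤ t) (ns : Fin t → ℕ) (hpos : ∀ i, 1 ≤ ns i)
    (hmono : Monotone ns) (n m : ℕ) (hn : n = ns ⟨t - 1, last_lt ht⟩)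
    (hm : m = (∑ i, ns i) - n) (hn2 : 2 ≤ n) (hnm : n < m) :
    strc (completeMultipartiteGraph fun i => Fin (ns i)) = 3 := by
  have hx : t - 1 < t := by omega
  have hnsum : n ≤ ∑ i, ns i := by
    rw [hn]
    exact Finset.single_le_sum (fun i _ => Nat.zero_le _) (Finset.mem_univ _)
  have hmeq : m = (∑ i, ns i) - ns ⟨t - 1, hx⟩ := by rw [hm, hn]
  rw [strc_eq_sInf]
  refine sInf_SS_eq ?_ ?_
  · -- 3 ∈ SS via the threshold colouring
    refine mem_SS (by omega) hpos 3 (ecase2 ns ht n) (fun _ => 2) ?_ ?_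
    · intro u v h
      have := ecase2_le (ns := ns) ht n u v
      omega
    · intro u v hfst hne
      by_cases hbig : u.1 = (⟨t - 1, hx⟩ : Fin t)
      · -- both in the big class
        have hvbig : v.1 = (⟨t - 1, hx⟩ : Fin t) := by rw [← hfst]; exact hbig
        have hane : u.2.val ≠ v.2.val := snd_ne hfst hne
        have hua : u.2.val < n := by
          have := u.2.isLt
          have h2 : ns u.1 = n := by rw [hbig, ← hn]
          omega
        have hva : v.2.val < n := by
          have := v.2.isLt
          have h2 : ns v.1 = n := by rw [hvbig, ← hn]
          omega
        set M := max u.2.val v.2.val with hM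
        have hMm : M < (∑ i, ns i) - ns ⟨t - 1, hx⟩ := by omega
        set w := (rankEquiv (ns := ns) ht).symm ⟨M, hMm⟩ with hwdef
        have hrw : rank ns w.val = M := rankEquiv_symm_val ht _
        have hMn : M % n = M := Nat.mod_eq_of_lt (by omega)
        refine ⟨w.val, ?_, ?_, ?_, ?_, ?_, ?_, ?_, ?_⟩
        · rw [hbig]; exact w.2
        · rw [hvbig]; exact w.2
        · rw [ecase2_big ht n hbig w.2, Sym2.eq_swap, ecase2_big ht n hvbig w.2,
            hrw, hMn]
          split_ifs <;> omega
        · rw [ecase2_big ht n hbig w.2]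
          split_ifs <;> simp
        · rw [Sym2.eq_swap, ecase2_big ht n hvbig w.2]
          split_ifs <;> simp
        · have := ecase2_le (ns := ns) ht n u w.val; omega
        · have := ecase2_le (ns := ns) ht n w.val v; omega
        · simp
      · -- both in a small class
        have hvbig : v.1 ≠ (⟨t - 1, hx⟩ : Fin t) := by rw [← hfst]; exact hbig
        have hns : ns u.1 ≤ n := by
          have := hmono (le_last ht u.1)
          omega
        have hrne : rank ns u % n ≠ rank ns v % n :=
          mod_rank_ne ht (by omega) hfst hne hns
        have hru : rank ns u % n < n := Nat.mod_lt _ (by omega)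
        have hrv : rank ns v % n < n := Nat.mod_lt _ (by omega)
        set A := min (rank ns u % n) (rank ns v % n) with hA
        have hAn : A < ns ⟨t - 1, hx⟩ := by omega
        set w : (i : Fin t) × Fin (ns i) := ⟨⟨t - 1, hx⟩, ⟨A, hAn⟩⟩ with hwdef
        refine ⟨w, hbig ∘ Eq.symm, hvbig ∘ Eq.symm, ?_, ?_, ?_, ?_, ?_, ?_⟩
        · rw [ecase2_big' ht n hbig rfl, Sym2.eq_swap, ecase2_big' ht n hvbig rfl]
          show (if rank ns u % n ≤ A then 1 else 0) ≠ (if rank ns v % n ≤ A then 1 else 0)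
          split_ifs <;> omega
        · rw [ecase2_big' ht n hbig rfl]
          show (if rank ns u % n ≤ A then 1 else 0) ≠ 2
          split_ifs <;> omega
        · rw [Sym2.eq_swap, ecase2_big' ht n hvbig rfl]
          show (if rank ns v % n ≤ A then 1 else 0) ≠ 2
          split_ifs <;> omega
        · have := ecase2_le (ns := ns) ht n u w; omega
        · have := ecase2_le (ns := ns) ht n w v; omega
        · simp
  · -- 2 ∉ SS
    intro h0
    obtain ⟨cE, cV, h⟩ := of_mem_SS (by omega) hpos 2 h0
    have h0n : (0 : ℕ) < ns ⟨t - 1, hx⟩ := by omega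
    have h1n : (1 : ℕ) < ns ⟨t - 1, hx⟩ := by omega
    obtain ⟨w, hw1, hc1, hc2, hc3, hb1, hb2, hb3⟩ :=
      h ⟨⟨t - 1, hx⟩, ⟨0, h0n⟩⟩ ⟨⟨t - 1, hx⟩, ⟨1, h1n⟩⟩ rfl
        (by intro hc; have := snd_ne (u := (⟨⟨t - 1, hx⟩, ⟨0, h0n⟩⟩ : (i : Fin t) × Fin (ns i))) rfl; simp [Fin.ext_iff] at hc)
    omega


section Case3

variable {t : ℕ} {ns : Fin t → ℕ}

/-- The code colouring used when `m ≤ n`. -/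
noncomputable def ecase3 (ns : Fin t → ℕ) (ht : 3 ≤ t) (n : ℕ)
    (hn : n = ns ⟨t - 1, last_lt ht⟩)
    (g : Fin n → Fin ((∑ i, ns i) - ns ⟨t - 1, last_lt ht⟩) → ℕ) :
    Sym2 ((i : Fin t) × Fin (ns i)) → ℕ :=
  Sym2.lift ⟨fun u v =>
    if h : u.1 = (⟨t - 1, last_lt ht⟩ : Fin t) ∧ v.1 ≠ (⟨t - 1, last_lt ht⟩ : Fin t) then
      g ⟨u.2.val, by
        have h1 := u.2.isLt
        have h2 : ns u.1 = n := by rw [h.1]; exact hn.symm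
        omega⟩ (rankEquiv ht ⟨v, h.2⟩)
    else if h' : v.1 = (⟨t - 1, last_lt ht⟩ : Fin t) ∧ u.1 ≠ (⟨t - 1, last_lt ht⟩ : Fin t) then
      g ⟨v.2.val, by
        have h1 := v.2.isLt
        have h2 : ns v.1 = n := by rw [h'.1]; exact hn.symm
        omega⟩ (rankEquiv ht ⟨u, h'.2⟩)
    else 0, by
      intro u v
      dsimp only
      split_ifs with h1 h2 h3 <;> first | rfl | (exfalso; tauto)⟩

lemma ecase3_big (ht : 3 ≤ t) (n : ℕ) (hn : n = ns ⟨t - 1, last_lt ht⟩)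
    (g : Fin n → Fin ((∑ i, ns i) - ns ⟨t - 1, last_lt ht⟩) → ℕ)
    {u w : (i : Fin t) × Fin (ns i)}
    (hu : u.1 = (⟨t - 1, last_lt ht⟩ : Fin t)) (hw : w.1 ≠ (⟨t - 1, last_lt ht⟩ : Fin t))
    (hval : u.2.val < n) :
    ecase3 ns ht n hn g s(u, w) = g ⟨u.2.val, hval⟩ (rankEquiv ht ⟨w, hw⟩) := by
  rw [ecase3, Sym2.lift_mk]
  dsimp only
  rw [dif_pos ⟨hu, hw⟩]

lemma ecase3_small_big (ht : 3 ≤ t) (n : ℕ) (hn : n = ns ⟨t - 1, last_lt ht⟩)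
    (g : Fin n → Fin ((∑ i, ns i) - ns ⟨t - 1, last_lt ht⟩) → ℕ)
    {u w : (i : Fin t) × Fin (ns i)}
    (hu : u.1 ≠ (⟨t - 1, last_lt ht⟩ : Fin t)) (hw : w.1 = (⟨t - 1, last_lt ht⟩ : Fin t))
    (hval : w.2.val < n) :
    ecase3 ns ht n hn g s(u, w) = g ⟨w.2.val, hval⟩ (rankEquiv ht ⟨u, hu⟩) := by
  rw [ecase3, Sym2.lift_mk]
  dsimp only
  rw [dif_neg (fun hc => hc.2 hw), dif_pos ⟨hw, hu⟩]

lemma ecase3_lt (ht : 3 ≤ t) (n : ℕ) (hn : n = ns ⟨t - 1, last_lt ht⟩)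
    (g : Fin n → Fin ((∑ i, ns i) - ns ⟨t - 1, last_lt ht⟩) → ℕ)
    (c : ℕ) (hc : 0 < c) (hg : ∀ x j, g x j < c) (u v : (i : Fin t) × Fin (ns i)) :
    ecase3 ns ht n hn g s(u, v) < c := by
  rw [ecase3, Sym2.lift_mk]
  dsimp only
  split_ifs with h1 h2
  exacts [hg _ _, hg _ _, hc]

end Case3

lemma case_three (t : ℕ) (ht : 3 ≤ t) (ns : Fin t → ℕ) (hpos : ∀ i, 1 ≤ ns i)
    (hmono : Monotone ns) (n m : ℕ) (hn : n = ns ⟨t - 1, last_lt ht⟩)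
    (hm : m = (∑ i, ns i) - n) (hmn : m ≤ n) :
    strc (completeMultipartiteGraph fun i => Fin (ns i)) =
      sInf {b : ℕ | n ≤ b ^ m} + 1 := by
  have hx : t - 1 < t := by omega
  have hnl : ns ⟨t - 1, hx⟩ = n := hn.symm
  have hsum_erase := sum_erase_last (ns := ns) ht
  have herase_card : (Finset.univ.erase (⟨t - 1, hx⟩ : Fin t)).card = t - 1 := by
    rw [Finset.card_erase_of_mem (Finset.mem_univ _), Finset.card_univ, Fintype.card_fin]
  have herase_le : t - 1 ≤ ∑ i ∈ Finset.univ.erase (⟨t - 1, hx⟩ : Fin t), ns i := by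
    calc t - 1 = ∑ _i ∈ Finset.univ.erase (⟨t - 1, hx⟩ : Fin t), 1 := by
          rw [Finset.sum_const, smul_eq_mul, mul_one, herase_card]
      _ ≤ _ := Finset.sum_le_sum (fun i _ => hpos i)
  have hmeq : m = (∑ i, ns i) - ns ⟨t - 1, hx⟩ := by rw [hm, hn]
  have hm2 : 2 ≤ m := by omega
  have hn2 : 2 ≤ n := le_trans hm2 hmn
  have hTn : n ∈ {b : ℕ | n ≤ b ^ m} := Nat.le_self_pow (by omega) n
  set b := sInf {b : ℕ | n ≤ b ^ m} with hbdef
  have hbT : b ∈ {b : ℕ | n ≤ b ^ m} := Nat.sInf_mem ⟨n, hTn⟩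
  have hbT' : n ≤ b ^ m := hbT
  have hb2 : 2 ≤ b := by
    by_contra hcon
    have hb1 : b ≤ 1 := by omega
    have := Nat.pow_le_pow_left hb1 m
    rw [one_pow] at this
    omega
  have hmn' : (∑ i, ns i) - ns ⟨t - 1, hx⟩ ≤ n := by omega
  have hbT'' : n ≤ b ^ ((∑ i, ns i) - ns ⟨t - 1, hx⟩) := by rw [← hmeq]; exact hbT'
  rw [strc_eq_sInf]
  refine sInf_SS_eq ?_ ?_
  · -- b + 1 ∈ SS
    obtain ⟨g, ginj, gbound, gpres⟩ :=
      exists_code b ((∑ i, ns i) - ns ⟨t - 1, hx⟩) n hb2 hmn' hbT''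
    refine mem_SS (by omega) hpos (b + 1) (ecase3 ns ht n hn g) (fun _ => b) ?_ ?_
    · intro u v hne
      exact ecase3_lt ht n hn g (b + 1) (by omega) (fun x j => by have := gbound x j; omega) u v
    · intro u v hfst hne
      by_cases hbig : u.1 = (⟨t - 1, hx⟩ : Fin t)
      · -- both in the big class
        have hvbig : v.1 = (⟨t - 1, hx⟩ : Fin t) := by rw [← hfst]; exact hbig
        have hane : u.2.val ≠ v.2.val := snd_ne hfst hne
        have hua : u.2.val < n := by
          have h1 := u.2.isLt
          have h2 : ns u.1 = n := by rw [hbig]; exact hnl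
          omega
        have hva : v.2.val < n := by
          have h1 := v.2.isLt
          have h2 : ns v.1 = n := by rw [hvbig]; exact hnl
          omega
        have hgne : g ⟨u.2.val, hua⟩ ≠ g ⟨v.2.val, hva⟩ := by
          intro hc
          exact hane (congrArg Fin.val (ginj hc))
        obtain ⟨j, hj⟩ := Function.ne_iff.1 hgne
        set w := (rankEquiv (ns := ns) ht).symm j with hwdef
        have hkey : rankEquiv (ns := ns) ht ⟨w.val, w.2⟩ = j :=
          (rankEquiv (ns := ns) ht).apply_symm_apply j
        refine ⟨w.val, ?_, ?_, ?_, ?_, ?_, ?_, ?_, ?_⟩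
        · rw [hbig]; exact w.2
        · rw [hvbig]; exact w.2
        · rw [ecase3_big ht n hn g hbig w.2 hua, Sym2.eq_swap,
            ecase3_big ht n hn g hvbig w.2 hva, hkey]
          exact hj
        · rw [ecase3_big ht n hn g hbig w.2 hua, hkey]
          show g ⟨u.2.val, hua⟩ j ≠ b
          have := gbound ⟨u.2.val, hua⟩ j
          omega
        · rw [Sym2.eq_swap, ecase3_big ht n hn g hvbig w.2 hva, hkey]
          show g ⟨v.2.val, hva⟩ j ≠ b
          have := gbound ⟨v.2.val, hva⟩ j
          omega
        · rw [ecase3_big ht n hn g hbig w.2 hua, hkey]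
          have := gbound ⟨u.2.val, hua⟩ j
          omega
        · rw [Sym2.eq_swap, ecase3_big ht n hn g hvbig w.2 hva, hkey]
          have := gbound ⟨v.2.val, hva⟩ j
          omega
        · show b < b + 1
          omega
      · -- both in a small class
        have hvbig : v.1 ≠ (⟨t - 1, hx⟩ : Fin t) := by rw [← hfst]; exact hbig
        set ju := rankEquiv (ns := ns) ht ⟨u, hbig⟩ with hjudef
        set jv := rankEquiv (ns := ns) ht ⟨v, hvbig⟩ with hjvdef
        have hjne : ju.val ≠ jv.val := by
          intro hc
          have h1 : ju = jv := Fin.ext hc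
          have h2 := (rankEquiv (ns := ns) ht).injective h1
          exact hne (congrArg Subtype.val h2)
        have hjun : ju.val < n := by
          have := ju.isLt
          omega
        have hwlt : ju.val < ns ⟨t - 1, hx⟩ := by omega
        have hjult : ju.val < (∑ i, ns i) - ns ⟨t - 1, hx⟩ := ju.isLt
        refine ⟨⟨⟨t - 1, hx⟩, ⟨ju.val, hwlt⟩⟩, fun hc => hbig hc.symm,
          fun hc => hvbig hc.symm, ?_, ?_, ?_, ?_, ?_, ?_⟩
        · rw [ecase3_small_big ht n hn g hbig rfl hjun,
            ecase3_big ht n hn g rfl hvbig hjun]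
          rw [gpres ⟨ju.val, hjun⟩ hjult ju,
            gpres ⟨ju.val, hjun⟩ hjult jv]
          rw [if_pos rfl, if_neg (fun hc : jv.val = ju.val => hjne hc.symm)]
          omega
        · rw [ecase3_small_big ht n hn g hbig rfl hjun,
            gpres ⟨ju.val, hjun⟩ hjult ju]
          rw [if_pos rfl]
          show (1 : ℕ) ≠ b
          omega
        · rw [ecase3_big ht n hn g rfl hvbig hjun,
            gpres ⟨ju.val, hjun⟩ hjult jv]
          rw [if_neg (fun hc : jv.val = ju.val => hjne hc.symm)]
          show (0 : ℕ) ≠ b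
          omega
        · rw [ecase3_small_big ht n hn g hbig rfl hjun]
          show g ⟨ju.val, hjun⟩ ju < b + 1
          have := gbound ⟨ju.val, hjun⟩ ju
          omega
        · rw [ecase3_big ht n hn g rfl hvbig hjun]
          show g ⟨ju.val, hjun⟩ jv < b + 1
          have := gbound ⟨ju.val, hjun⟩ jv
          omega
        · show b < b + 1
          omega
  · -- b ∉ SS
    intro h0
    simp only [Nat.add_sub_cancel] at h0
    obtain ⟨cE, cV, h⟩ := of_mem_SS (by omega) hpos b h0
    classical
    set A : {v : (i : Fin t) × Fin (ns i) // v.1 ≠ (⟨t - 1, hx⟩ : Fin t)} → Finset ℕ :=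
      fun w => if cV w.val < b then (Finset.range b).erase (cV w.val)
        else (Finset.range b).erase 0 with hAdef
    have hA : ∀ w, (A w).card ≤ b - 1 := by
      intro w
      rw [hAdef]
      dsimp only
      split_ifs with hcv
      · rw [Finset.card_erase_of_mem (Finset.mem_range.2 hcv), Finset.card_range]
      · rw [Finset.card_erase_of_mem (Finset.mem_range.2 (by omega)), Finset.card_range]
    set F : Fin n → {v : (i : Fin t) × Fin (ns i) // v.1 ≠ (⟨t - 1, hx⟩ : Fin t)} → ℕ :=
      fun x w => cE s(⟨⟨t - 1, hx⟩, ⟨x.val, by omega⟩⟩, w.val) with hFdef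
    have hwit : ∀ x ∈ (Finset.univ : Finset (Fin n)), ∀ y ∈ (Finset.univ : Finset (Fin n)),
        x ≠ y → ∃ w ∈ (Finset.univ : Finset _), F x w ≠ F y w ∧ F x w ∈ A w ∧ F y w ∈ A w := by
      intro x _ y _ hxy
      have hxv : x.val < ns ⟨t - 1, hx⟩ := by have := x.isLt; omega
      have hyv : y.val < ns ⟨t - 1, hx⟩ := by have := y.isLt; omega
      set u : (i : Fin t) × Fin (ns i) := ⟨⟨t - 1, hx⟩, ⟨x.val, hxv⟩⟩ with hudef
      set v : (i : Fin t) × Fin (ns i) := ⟨⟨t - 1, hx⟩, ⟨y.val, hyv⟩⟩ with hvdef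
      have huv : u ≠ v := by
        intro hc
        have := congrArg (fun z : (i : Fin t) × Fin (ns i) => z.2.val) hc
        change x.val = y.val at this
        exact hxy (Fin.ext this)
      obtain ⟨w, hw1, hc1, hc2, hc3, hb1, hb2, hb3⟩ := h u v rfl huv
      have hw1' : w.1 ≠ (⟨t - 1, hx⟩ : Fin t) := hw1
      refine ⟨⟨w, hw1'⟩, Finset.mem_univ _, ?_, ?_, ?_⟩
      · show cE s(u, w) ≠ cE s(v, w)
        rw [Sym2.eq_swap (a := v)]
        intro hc
        rw [hc] at hc1
        exact hc1 rfl
      · show cE s(u, w) ∈ A ⟨w, hw1'⟩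
        rw [hAdef]
        dsimp only
        rw [if_pos hb3]
        exact Finset.mem_erase.2 ⟨hc2, Finset.mem_range.2 hb1⟩
      · show cE s(v, w) ∈ A ⟨w, hw1'⟩
        rw [hAdef]
        dsimp only
        rw [if_pos hb3]
        rw [Sym2.eq_swap (a := v)]
        exact Finset.mem_erase.2 ⟨hc3, Finset.mem_range.2 hb2⟩
    have hsep := sep_bound (b - 1) (by omega) A hA F Finset.univ Finset.univ hwit
    rw [Finset.card_univ, Finset.card_univ, Fintype.card_fin, card_W ht] at hsep
    have hfinal : n ≤ (b - 1) ^ m := by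
      rw [hmeq]
      exact hsep
    have : b ≤ b - 1 := Nat.sInf_le hfinal
    omega

/-- Let `t ≥ 3`, let `1 ≤ n_1 ≤ ⋯ ≤ n_t`, let `m = n_1 + ⋯ + n_{t-1}` and `n = n_t`.
Then `strc(K_{n_1,…,n_t})` equals `1` if `n = 1`; equals `3` if `n ≥ 2` and `m > n`; and
equals `⌈n^{1/m}⌉ + 1` if `m ≤ n`, where `⌈n^{1/m}⌉` is the least integer `b` with
`b ^ m ≥ n`. -/
theorem strc_completeMultipartite (t : ℕ) (ht : 3 ≤ t) (ns : Fin t → ℕ)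
    (hpos : ∀ i, 1 ≤ ns i) (hmono : Monotone ns) (n m : ℕ)
    (hn : n = ns ⟨t - 1, by omega⟩) (hm : m = (∑ i, ns i) - n) :
    (n = 1 → strc (completeMultipartiteGraph fun i => Fin (ns i)) = 1) ∧
    (2 ≤ n → n < m → strc (completeMultipartiteGraph fun i => Fin (ns i)) = 3) ∧
    (m ≤ n → strc (completeMultipartiteGraph fun i => Fin (ns i)) =
      sInf {b : ℕ | n ≤ b ^ m} + 1) := by
  exact ⟨fun h1 => case_one t ht ns hpos hmono n hn h1,
    fun h2 h3 => case_two t ht ns hpos hmono n m hn hm h2 h3,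
    fun h4 => case_three t ht ns hpos hmono n m hn hm h4⟩

end RainbowConn
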